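/- arXiv:1710.07789 — 2 statements merged into one kernel-verified Lean document; each statement's English description precedes it below -/
import Mathlib

section
/- Let C be a linear code of length n over R. Then Φ(C^⊥) = Φ(C)^⊥, where duals are taken with respect to the standard Euclidean inner products on Rⁿ and F_q^{3n} respectively. Consequently, C is self-dual if and only if Φ(C) is self-dual. -/
/-- The ring `R = F + uF + vF` with `u² = u`, `v² = v`, `uv = vu = 0`,
represented as free `F`-module with basis `{1, u, v}`:
`⟨a, b, c⟩` stands for `a + u b + v c`. -/
@[ext] structure R3 (F : Type*) where
  a : F
  b : F
  c : F

namespace R3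

variable {F : Type*} [CommRing F]

instance : Zero (R3 F) := ⟨⟨0, 0, 0⟩⟩
instance : One (R3 F) := ⟨⟨1, 0, 0⟩⟩
instance : Add (R3 F) := ⟨fun x y => ⟨x.a + y.a, x.b + y.b, x.c + y.c⟩⟩
instance : Neg (R3 F) := ⟨fun x => ⟨-x.a, -x.b, -x.c⟩⟩
instance : Mul (R3 F) :=
  ⟨fun x y => ⟨x.a * y.a, x.a * y.b + x.b * y.a + x.b * y.b,
    x.a * y.c + x.c * y.a + x.c * y.c⟩⟩

@[simp] lemma zero_a : (0 : R3 F).a = 0 := rfl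
@[simp] lemma zero_b : (0 : R3 F).b = 0 := rfl
@[simp] lemma zero_c : (0 : R3 F).c = 0 := rfl
@[simp] lemma one_a : (1 : R3 F).a = 1 := rfl
@[simp] lemma one_b : (1 : R3 F).b = 0 := rfl
@[simp] lemma one_c : (1 : R3 F).c = 0 := rfl
@[simp] lemma add_a (x y : R3 F) : (x + y).a = x.a + y.a := rfl
@[simp] lemma add_b (x y : R3 F) : (x + y).b = x.b + y.b := rfl
@[simp] lemma add_c (x y : R3 F) : (x + y).c = x.c + y.c := rfl
@[simp] lemma neg_a (x : R3 F) : (-x).a = -x.a := rfl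
@[simp] lemma neg_b (x : R3 F) : (-x).b = -x.b := rfl
@[simp] lemma neg_c (x : R3 F) : (-x).c = -x.c := rfl
@[simp] lemma mul_a (x y : R3 F) : (x * y).a = x.a * y.a := rfl
@[simp] lemma mul_b (x y : R3 F) :
    (x * y).b = x.a * y.b + x.b * y.a + x.b * y.b := rfl
@[simp] lemma mul_c (x y : R3 F) :
    (x * y).c = x.a * y.c + x.c * y.a + x.c * y.c := rfl

instance : CommRing (R3 F) where
  add := (· + ·)
  zero := 0
  neg := Neg.neg
  mul := (· * ·)
  one := 1
  add_assoc x y z := by ext <;> simp <;> ring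
  zero_add x := by ext <;> simp
  add_zero x := by ext <;> simp
  add_comm x y := by ext <;> simp <;> ring
  neg_add_cancel x := by ext <;> simp
  mul_assoc x y z := by ext <;> simp <;> ring
  one_mul x := by ext <;> simp
  mul_one x := by ext <;> simp
  left_distrib x y z := by ext <;> simp <;> ring
  right_distrib x y z := by ext <;> simp <;> ring
  zero_mul x := by ext <;> simp
  mul_zero x := by ext <;> simp
  mul_comm x y := by ext <;> simp <;> ring
  nsmul := nsmulRec
  zsmul := zsmulRec

/-- the element `u` -/
def u : R3 F := ⟨0, 1, 0⟩
/-- the element `v` -/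
def v : R3 F := ⟨0, 0, 1⟩
/-- the canonical embedding of `F` into `R3 F` -/
def ofF (x : F) : R3 F := ⟨x, 0, 0⟩

instance : SMul F (R3 F) := ⟨fun r x => ⟨r * x.a, r * x.b, r * x.c⟩⟩

@[simp] lemma smul_a (r : F) (x : R3 F) : (r • x).a = r * x.a := rfl
@[simp] lemma smul_b (r : F) (x : R3 F) : (r • x).b = r * x.b := rfl
@[simp] lemma smul_c (r : F) (x : R3 F) : (r • x).c = r * x.c := rfl

instance : Module F (R3 F) where
  one_smul x := by ext <;> simp
  mul_smul r s x := by ext <;> simp <;> ring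
  smul_zero r := by ext <;> simp
  smul_add r x y := by ext <;> simp <;> ring
  add_smul r s x := by ext <;> simp <;> ring
  zero_smul x := by ext <;> simp

instance [Fintype F] : Fintype (R3 F) :=
  Fintype.ofEquiv (F × F × F)
    { toFun := fun t => ⟨t.1, t.2.1, t.2.2⟩
      invFun := fun x => (x.a, x.b, x.c)
      left_inv := fun _ => rfl
      right_inv := fun _ => rfl }

/-- the componentwise extension to `R3 F` of a map `σ : F → F`:
`a + u b + v c ↦ σ a + u (σ b) + v (σ c)`. -/
def lift (σ : F → F) : R3 F → R3 F := fun x => ⟨σ x.a, σ x.b, σ x.c⟩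

/-- the Gray map `a + u b + v c ↦ (a, a + b, a + c)`. -/
def gray (x : R3 F) : F × F × F := (x.a, x.a + x.b, x.a + x.c)

/-- the Gray map applied componentwise to vectors, with the three blocks
of length `n` arranged as a triple. -/
def grayV {n : ℕ} (x : Fin n → R3 F) :
    (Fin n → F) × (Fin n → F) × (Fin n → F) :=
  (fun i => (x i).a, fun i => (x i).a + (x i).b, fun i => (x i).a + (x i).c)

end R3

/-- the skew `α`-constacyclic shift `(c₀, …, c_{n-1}) ↦ (α θ(c_{n-1}), θ(c₀), …, θ(c_{n-2}))`
over a ring `R` with respect to a map `θ : R → R`. -/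
def tauShift {R : Type*} [Ring R] {n : ℕ} [NeZero n] (θ : R → R) (α : R)
    (c : Fin n → R) : Fin n → R :=
  fun i => (if i = 0 then α else 1) * θ (c (i - 1))

/-- first component code `C₁ = {a : a + u b + v c ∈ C}` of a code over `R3 F`. -/
def comp1 {F : Type*} [CommRing F] {n : ℕ} (C : Set (Fin n → R3 F)) :
    Set (Fin n → F) :=
  {y | ∃ x ∈ C, y = fun i => (x i).a}

/-- second component code `C₂ = {a + b : a + u b + v c ∈ C}`. -/
def comp2 {F : Type*} [CommRing F] {n : ℕ} (C : Set (Fin n → R3 F)) :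
    Set (Fin n → F) :=
  {y | ∃ x ∈ C, y = fun i => (x i).a + (x i).b}

/-- third component code `C₃ = {a + c : a + u b + v c ∈ C}`. -/
def comp3 {F : Type*} [CommRing F] {n : ℕ} (C : Set (Fin n → R3 F)) :
    Set (Fin n → F) :=
  {y | ∃ x ∈ C, y = fun i => (x i).a + (x i).c}

/-- Euclidean dual of a code over a commutative ring. -/
def dualCode {R : Type*} [CommRing R] {n : ℕ} (C : Set (Fin n → R)) :
    Set (Fin n → R) :=
  {x | ∀ y ∈ C, ∑ i, x i * y i = 0}

/-- Euclidean dual of a code of length `3n` over `F`, written as triples of blocks. -/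
def dualCode3 {F : Type*} [CommRing F] {n : ℕ}
    (S : Set ((Fin n → F) × (Fin n → F) × (Fin n → F))) :
    Set ((Fin n → F) × (Fin n → F) × (Fin n → F)) :=
  {x | ∀ y ∈ S,
    (∑ i, x.1 i * y.1 i) + (∑ i, x.2.1 i * y.2.1 i) + (∑ i, x.2.2 i * y.2.2 i) = 0}

/-- multiplication in the skew polynomial ring `R[x;θ]`, determined by
`a xⁱ * b xʲ = a θⁱ(b) x^{i+j}`. -/
noncomputable def skewMul {R : Type*} [CommRing R] (θ : R → R)
    (f g : Polynomial R) : Polynomial R :=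
  ∑ i ∈ f.support, ∑ j ∈ g.support,
    Polynomial.C (f.coeff i * θ^[i] (g.coeff j)) * Polynomial.X ^ (i + j)

/-- `f ≡ g` modulo the left ideal generated by `d` in the skew polynomial ring. -/
noncomputable def sModEq {R : Type*} [CommRing R] (θ : R → R)
    (d f g : Polynomial R) : Prop :=
  ∃ h, f - g = skewMul θ h d

/-- the substitution map `f(x) ↦ f(αx)` (with `θ(α) = α`, so `(αx)ⁱ = αⁱxⁱ`). -/
noncomputable def rhoMap {R : Type*} [CommRing R] (α : R) (f : Polynomial R) :
    Polynomial R :=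
  ∑ i ∈ f.support, Polynomial.C (f.coeff i * α ^ i) * Polynomial.X ^ i

section Aux

variable {F : Type*} [CommRing F]

/-- projection to `a` as an additive hom -/
def R3.aHom : R3 F →+ F := { toFun := R3.a, map_zero' := rfl, map_add' := fun _ _ => rfl }
/-- projection to `b` as an additive hom -/
def R3.bHom : R3 F →+ F := { toFun := R3.b, map_zero' := rfl, map_add' := fun _ _ => rfl }
/-- projection to `c` as an additive hom -/
def R3.cHom : R3 F →+ F := { toFun := R3.c, map_zero' := rfl, map_add' := fun _ _ => rfl }

lemma R3.sum_a {n : ℕ} (x : Fin n → R3 F) : (∑ i, x i).a = ∑ i, (x i).a :=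
  map_sum (R3.aHom (F := F)) x Finset.univ

lemma R3.sum_b {n : ℕ} (x : Fin n → R3 F) : (∑ i, x i).b = ∑ i, (x i).b :=
  map_sum (R3.bHom (F := F)) x Finset.univ

lemma R3.sum_c {n : ℕ} (x : Fin n → R3 F) : (∑ i, x i).c = ∑ i, (x i).c :=
  map_sum (R3.cHom (F := F)) x Finset.univ

lemma R3.grayV_inj {n : ℕ} : Function.Injective (R3.grayV (F := F) (n := n)) := by
  intro x y h
  simp only [R3.grayV, Prod.mk.injEq] at h
  obtain ⟨h1, h2, h3⟩ := h
  funext i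
  have e1 := congrFun h1 i
  have e2 := congrFun h2 i
  have e3 := congrFun h3 i
  ext
  · exact e1
  · have := e2; rw [e1] at this; exact add_left_cancel this
  · have := e3; rw [e1] at this; exact add_left_cancel this

/-- the key inner-product identity for the Gray map -/
lemma R3.gray_ip {n : ℕ} (x y : Fin n → R3 F) :
    (∑ i, (R3.grayV x).1 i * (R3.grayV y).1 i) +
      (∑ i, (R3.grayV x).2.1 i * (R3.grayV y).2.1 i) +
      (∑ i, (R3.grayV x).2.2 i * (R3.grayV y).2.2 i) =
    3 * (∑ i, x i * y i).a + (∑ i, x i * y i).b + (∑ i, x i * y i).c := by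
  rw [R3.sum_a, R3.sum_b, R3.sum_c, Finset.mul_sum, ← Finset.sum_add_distrib,
    ← Finset.sum_add_distrib, ← Finset.sum_add_distrib, ← Finset.sum_add_distrib]
  refine Finset.sum_congr rfl fun i _ => ?_
  simp only [R3.grayV, R3.mul_a, R3.mul_b, R3.mul_c]
  ring

end Aux

open R3 in
/-- `Φ(C^⊥) = Φ(C)^⊥`, and `C` is self-dual iff `Φ(C)` is self-dual. -/
theorem stmt12 (p m : ℕ) (hp : Nat.Prime p) (hpodd : Odd p)
    (F : Type*) [Field F] [Fintype F] (hcard : Fintype.card F = p ^ m)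
    (n : ℕ) (C : Submodule (R3 F) (Fin n → R3 F)) :
    (grayV '' dualCode (C : Set (Fin n → R3 F)) =
        dualCode3 (grayV '' (C : Set (Fin n → R3 F)))) ∧
    (dualCode (C : Set (Fin n → R3 F)) = (C : Set (Fin n → R3 F)) ↔
        dualCode3 (grayV '' (C : Set (Fin n → R3 F)))
          = grayV '' (C : Set (Fin n → R3 F))) := by
  have main : grayV '' dualCode (C : Set (Fin n → R3 F)) =
      dualCode3 (grayV '' (C : Set (Fin n → R3 F))) := by
    apply Set.Subset.antisymm
    · rintro _ ⟨x, hx, rfl⟩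
      rintro _ ⟨y, hy, rfl⟩
      rw [R3.gray_ip, hx y hy]
      simp
    · intro z hz
      set x : Fin n → R3 F := fun i => ⟨z.1 i, z.2.1 i - z.1 i, z.2.2 i - z.1 i⟩ with hxdef
      have hgx : grayV x = z := by
        simp only [grayV, hxdef]
        ext i <;> simp
      refine ⟨x, ?_, hgx⟩
      intro y hy
      set S : R3 F := ∑ i, x i * y i with hS
      have key : ∀ w ∈ C, 3 * (∑ i, x i * w i).a + (∑ i, x i * w i).b +
          (∑ i, x i * w i).c = 0 := by
        intro w hw
        rw [← R3.gray_ip, hgx]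
        exact hz _ ⟨w, hw, rfl⟩
      have h1 := key y hy
      have hu : (u : R3 F) • y ∈ C := C.smul_mem u hy
      have hv : (v : R3 F) • y ∈ C := C.smul_mem v hy
      have hus : (∑ i, x i * ((u : R3 F) • y) i) = u * S := by
        rw [hS, Finset.mul_sum]
        refine Finset.sum_congr rfl fun i _ => ?_
        simp only [Pi.smul_apply, smul_eq_mul]
        ring
      have hvs : (∑ i, x i * ((v : R3 F) • y) i) = v * S := by
        rw [hS, Finset.mul_sum]
        refine Finset.sum_congr rfl fun i _ => ?_
        simp only [Pi.smul_apply, smul_eq_mul]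
        ring
      have h2 := key _ hu
      have h3 := key _ hv
      rw [hus] at h2
      rw [hvs] at h3
      simp only [R3.mul_a, R3.mul_b, R3.mul_c, u, v] at h2 h3
      rw [← hS] at h1
      ring_nf at h1 h2 h3
      have ha : S.a = 0 := by linear_combination h1 - h2 - h3
      have hb : S.b = 0 := by linear_combination h2 - (h1 - h2 - h3)
      have hc : S.c = 0 := by linear_combination h3 - (h1 - h2 - h3)
      ext
      · exact ha
      · exact hb
      · exact hc
  refine ⟨main, ?_⟩
  constructor
  · intro h
    rw [← main, h]
  · intro h
    apply Set.image_injective.mpr (R3.grayV_inj (F := F) (n := n))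
    rw [main, h]
end

section
/- Let C be a skew α-constacyclic code of length n over R with respect to θ_t of order k, where α² = 1 and α is fixed by θ_t, and let l = gcd(n, k). Then C is an α-quasi-twisted code of index l: writing codewords as m = n/l blocks of length l, if (c_{0,0},…,c_{0,l-1},…,c_{m-1,0},…,c_{m-1,l-1}) ∈ C then (αc_{m-1,0},…,αc_{m-1,l-1}, c_{0,0},…,c_{m-2,l-1}) ∈ C. -/
/-!
The skew shift factors as `τ = σ ∘ θ`, where `σ` is the (non-skew) `α`-constacyclic shift and
`θ` acts coordinatewise. Since `θ` fixes `α`, the two commute, so `τᴺ = σᴺ ∘ θᴺ`, and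
`θᵏ = id` because `(p^t)^k = |F|`. Choosing `s` with `k ∣ s n + l` (Bézout), `C` is stable under
`τ^(s n + l) = σ^(s n + l) = α^s σˡ`, as `σⁿ` is multiplication by `α`; since `α² = 1`, the
scalar `α^s` can be cancelled inside the submodule `C`, so `C` is stable under `σˡ`, which is
the `α`-quasi-twisted shift by `l`.
-/

theorem Nat.exists_dvd_mul_add_gcd (n : ℕ) {k : ℕ} (hk : k ≠ 0) :
    ∃ s, k ∣ s * n + Nat.gcd n k := by
  -- with `gcd n k = n a + k b`, take `s ≡ -a (mod k)`
  refine ⟨((-Nat.gcdA n k) % k).toNat, ?_⟩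
  rw [← Int.natCast_dvd_natCast]
  push_cast
  rw [Int.toNat_of_nonneg (Int.emod_nonneg _ (by exact_mod_cast hk)), Nat.gcd_eq_gcd_ab,
    Int.emod_def]
  exact ⟨Nat.gcdB n k - (-Nat.gcdA n k) / k * n, by ring⟩

namespace R3

theorem lift_iterate {F : Type*} (σ : F → F) (N : ℕ) : (lift σ)^[N] = lift σ^[N] := by
  induction N with
  | zero => rfl
  | succ N ih => rw [Function.iterate_succ', ih, Function.iterate_succ']; rfl

theorem lift_pow_iterate_eq_id {F : Type*} [Field F] [Fintype F] {q k : ℕ}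
    (hq : q ^ k = Fintype.card F) : (lift fun a : F => a ^ q)^[k] = id := by
  rw [lift_iterate, pow_iterate, hq]
  funext x
  ext <;> simp [lift, FiniteField.pow_card]

variable {F : Type*} [CommRing F]

def liftRingHom (σ : F →+* F) : R3 F →+* R3 F where
  toFun := lift σ
  map_one' := by ext <;> simp [lift]
  map_mul' x y := by ext <;> simp [lift]
  map_zero' := by ext <;> simp [lift]
  map_add' x y := by ext <;> simp [lift]

end R3

section ConstacyclicShift

variable {S : Type*} [CommRing S] {n : ℕ} [NeZero n]

theorem tauShift_id_iterate_apply (α : S) {j : ℕ} (hj : j ≤ n) (c : Fin n → S) (i : Fin n) :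
    (tauShift id α)^[j] c i = (if (i : ℕ) < j then α else 1) * c (i - Fin.ofNat n j) := by
  induction j generalizing i with
  | zero => simp
  | succ j ih =>
    have hidx : 1 + Fin.ofNat n j = Fin.ofNat n (j + 1) := by
      ext
      simp [Fin.val_add, add_comm]
    rw [Function.iterate_succ_apply']
    simp only [tauShift, id]
    rw [ih (by omega), ← mul_assoc, sub_sub, hidx]
    congr 1
    rcases eq_or_ne i 0 with rfl | hi
    · obtain ⟨N, rfl⟩ := Nat.exists_eq_succ_of_ne_zero (NeZero.ne n)
      simp [show ¬N < j by omega]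
    · have hi' : (i : ℕ) ≠ 0 := Fin.val_ne_of_ne hi
      simp [hi, Fin.val_sub_one_of_ne_zero hi, show (i : ℕ) - 1 < j ↔ (i : ℕ) < j + 1 by omega]

theorem tauShift_id_iterate_mul_self (α : S) (s : ℕ) (c : Fin n → S) :
    (tauShift id α)^[s * n] c = α ^ s • c := by
  have hn : (tauShift (n := n) id α)^[n] = (α • ·) := by
    funext c i
    simp [tauShift_id_iterate_apply α le_rfl]
  rw [mul_comm, Function.iterate_mul, hn, smul_iterate]

theorem tauShift_iterate (θ : S →+* S) {α : S} (hα : θ α = α) (N : ℕ) :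
    (tauShift (n := n) θ α)^[N] = (tauShift id α)^[N] ∘ Pi.map fun _ => θ^[N] := by
  have hcomm : Function.Commute (tauShift (n := n) id α) (Pi.map fun _ => θ) := by
    intro c
    funext i
    by_cases hi : i = 0 <;> simp [tauShift, hi, hα]
  rw [show tauShift θ α = tauShift id α ∘ Pi.map fun _ => θ from rfl, hcomm.comp_iterate,
    Pi.map_iterate]

theorem mapsTo_tauShift_id_iterate_gcd (θ : S →+* S) {α : S} (hα : θ α = α) (hα2 : α ^ 2 = 1)
    {k : ℕ} (hθ : (⇑θ)^[k] = id) (hk : k ≠ 0) {C : Submodule S (Fin n → S)}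
    (hC : Set.MapsTo (tauShift θ α) (C : Set (Fin n → S)) C) :
    Set.MapsTo (tauShift id α)^[Nat.gcd n k] (C : Set (Fin n → S)) C := by
  obtain ⟨s, r, hr⟩ := Nat.exists_dvd_mul_add_gcd n hk
  have hθr : (⇑θ)^[s * n + Nat.gcd n k] = id := by
    rw [hr, Function.iterate_mul, hθ, Function.iterate_id]
  intro c hc
  have h := hC.iterate (s * n + Nat.gcd n k) hc
  rw [tauShift_iterate θ hα, hθr, Pi.map_id, Function.comp_id, Function.iterate_add_apply,
    tauShift_id_iterate_mul_self] at h
  have hαs : α ^ s * α ^ s = 1 := by rw [← mul_pow, ← sq, hα2, one_pow]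
  simpa only [smul_smul, hαs, one_smul, SetLike.mem_coe] using C.smul_mem (α ^ s) h

end ConstacyclicShift

open R3 in
theorem stmt18_general (p m t k n : ℕ) (hp : Nat.Prime p)
    (F : Type*) [Field F] [Fintype F] (hcard : Fintype.card F = p ^ m)
    (ht : t ∣ m) (hk : k = m / t) [NeZero n]
    (α : R3 F) (hαsq : α ^ 2 = 1)
    (hαfix : R3.lift (fun a : F => a ^ p ^ t) α = α)
    (C : Submodule (R3 F) (Fin n → R3 F))
    (hC : tauShift (R3.lift (fun a : F => a ^ p ^ t)) α ''
        (C : Set (Fin n → R3 F)) = (C : Set (Fin n → R3 F))) :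
    ∀ cw ∈ C,
      (fun i : Fin n => (if (i : ℕ) < Nat.gcd n k then α else 1) *
          cw (i - Fin.ofNat n (Nat.gcd n k))) ∈ C := by
  intro cw hcw
  have : Fact p.Prime := ⟨hp⟩
  have : CharP F p := charP_of_card_eq_prime_pow hcard
  have hm : m ≠ 0 := by
    rintro rfl
    exact Fintype.one_lt_card.ne' (by simpa using hcard)
  have htk : t * k = m := hk ▸ Nat.mul_div_cancel' ht
  let θ := R3.liftRingHom (iterateFrobenius F p t)
  have hθk : (⇑θ)^[k] = id :=
    R3.lift_pow_iterate_eq_id (by rw [← pow_mul, htk, hcard])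
  have h := mapsTo_tauShift_id_iterate_gcd θ hαfix hαsq hθk (right_ne_zero_of_mul (htk ▸ hm))
    (Set.mapsTo_iff_image_subset.mpr hC.subset) hcw
  rwa [funext (tauShift_id_iterate_apply α (Nat.gcd_le_left k (Nat.pos_of_neZero n)) cw)] at h

open R3 in
/-- with `l = gcd(n,k)`, a skew `α`-constacyclic code over `R` (with
`α² = 1`, `α` fixed by `θ_t` of order `k = m/t`) is an `α`-quasi-twisted code of index
`l`: it is closed under the shift by `l` positions in which the wrapped-around block is
multiplied by `α`. -/
theorem stmt18 (p m t k n : ℕ) (hp : Nat.Prime p) (hpodd : Odd p)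
    (F : Type*) [Field F] [Fintype F] (hcard : Fintype.card F = p ^ m)
    (ht : t ∣ m) (htpos : 0 < t) (hk : k = m / t) [NeZero n]
    (α : R3 F) (hαsq : α ^ 2 = 1) (hαunit : IsUnit α)
    (hαfix : R3.lift (fun a : F => a ^ p ^ t) α = α)
    (C : Submodule (R3 F) (Fin n → R3 F))
    (hC : tauShift (R3.lift (fun a : F => a ^ p ^ t)) α ''
        (C : Set (Fin n → R3 F)) = (C : Set (Fin n → R3 F))) :
    ∀ cw ∈ C,
      (fun i : Fin n => (if (i : ℕ) < Nat.gcd n k then α else 1) *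
          cw (i - Fin.ofNat n (Nat.gcd n k))) ∈ C :=
  stmt18_general p m t k n hp F hcard ht hk α hαsq hαfix C hC
end
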